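/- Correctness of the single-pass matching statistics algorithm: given valid matching statistics MS[i+1] = (pos, len) with q = ISA[pos], if BWT[q] ≠ P[i], and p', p'' are the text positions whose suffixes are the nearest suffixes (in suffix-array order, below and above rank q) preceded in T by P[i], then MS[i] = (p*−1, 1 + min(len, LCE(p*, pos))) is a valid matching statistic at position i, where p* ∈ {p', p''} maximizes min(len, LCE(p*, pos)). -/

import Mathlib

/-- `lce T a b` = length of the longest common prefix of the suffixes
`T[a..]` and `T[b..]`. -/
noncomputable def lce {α : Type*} (T : List α) (a b : ℕ) : ℕ :=
  letI := Classical.decPred (fun ℓ : ℕ => (T.drop a).take ℓ = (T.drop b).take ℓ)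
  Nat.findGreatest (fun ℓ : ℕ => (T.drop a).take ℓ = (T.drop b).take ℓ) T.length

/-- The Burrows-Wheeler transform: `bwt T SA i = T[SA[i] - 1]` (circularly). -/
def bwt {α : Type*} [Inhabited α] (T : List α) (SA : ℕ → ℕ) (i : ℕ) : α :=
  T[(SA i + T.length - 1) % T.length]!

/-!
The new match is the one at `p*` extended by one character to the left: `T[p* - 1] = P[i]`, and
`T[p*..]` agrees with `T[pos..]`, hence with `P[i+1..]`, on `ℓ` characters.

For maximality, suppose `P[i..i+ℓ+1]` occurs in `T`, at `t - 1` say. If `ℓ = len` this contradicts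
the maximality of `MS[i+1]`. Otherwise `T[t..]` agrees with `T[pos..]` on `ℓ + 1` characters and
its BWT character is `P[i]`, so its rank is neither `q` nor strictly between `q'` and `q''`. As the
suffixes sharing a prefix with `T[pos..]` form an interval of ranks containing `q`, that interval
then contains `q'` or `q''`, i.e. `LCE(p', pos) > ℓ` or `LCE(p'', pos) > ℓ`, contradicting the
choice of `ℓ`.
-/

theorem List.take_eq_take_of_le {α : Type*} {A B : List α} {k m : ℕ}
    (h : A.take m = B.take m) (hkm : k ≤ m) : A.take k = B.take k := by
  simpa [List.take_take, Nat.min_eq_left hkm] using congrArg (List.take k) h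

theorem List.drop_eq_getElem!_cons {α : Type*} [Inhabited α] {T : List α} {x : ℕ}
    (h : x < T.length) : T.drop x = T[x]! :: T.drop (x + 1) := by
  rw [getElem!_pos T x h]
  exact List.drop_eq_getElem_cons h

theorem List.exists_getElem!_eq_of_cons_infix {α : Type*} [Inhabited α] {x : α} {L T : List α}
    (h : x :: L <:+: T) :
    ∃ s, s + 1 + L.length ≤ T.length ∧ T[s]! = x ∧ (T.drop (s + 1)).take L.length = L := by
  obtain ⟨u, v, rfl⟩ := h
  refine ⟨u.length, by simp; omega, by simp, ?_⟩
  simp [List.drop_append, List.drop_eq_nil_of_le]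

theorem List.take_eq_of_lex_of_lex {α : Type*} [Preorder α] :
    ∀ {k : ℕ} {X Y Z : List α}, List.Lex (· < ·) X Y → List.Lex (· < ·) Y Z →
      X.take k = Z.take k → Y.take k = X.take k
  | 0, _, _, _, _, _, _ => rfl
  | _ + 1, [], _, Z, _, hYZ, hXZ => by
    obtain rfl : Z = [] := by simpa using hXZ.symm
    cases hYZ
  | _ + 1, _ :: _, _, [], _, _, hXZ => by simp at hXZ
  | _ + 1, x :: _, _, z :: _, hXY, hYZ, hXZ => by
    simp only [List.take_succ_cons, List.cons.injEq] at hXZ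
    obtain ⟨rfl, hXZ⟩ := hXZ
    cases hXY with
    | rel h₁ =>
      cases hYZ with
      | rel h₂ => exact absurd (h₁.trans h₂) (lt_irrefl _)
      | cons => exact absurd h₁ (lt_irrefl _)
    | cons h₁ =>
      cases hYZ with
      | rel h₂ => exact absurd h₂ (lt_irrefl _)
      | cons h₂ => simp only [List.take_succ_cons, List.take_eq_of_lex_of_lex h₁ h₂ hXZ]

theorem List.take_succ_drop_eq {α : Type*} [Inhabited α] {A B : List α} {x y ℓ : ℕ}
    (hx : x < A.length) (hy : y < B.length) (hhead : B[y]! = A[x]!)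
    (htail : (B.drop (y + 1)).take ℓ = (A.drop (x + 1)).take ℓ) :
    (A.drop x).take (ℓ + 1) = (B.drop y).take (ℓ + 1) := by
  rw [List.drop_eq_getElem!_cons hx, List.drop_eq_getElem!_cons hy, List.take_succ_cons,
    List.take_succ_cons, hhead, htail]

section lce

variable {α : Type*} (T : List α) (a b : ℕ)

theorem take_lce_eq : (T.drop a).take (lce T a b) = (T.drop b).take (lce T a b) := by
  let := Classical.decPred fun ℓ => (T.drop a).take ℓ = (T.drop b).take ℓ
  exact Nat.findGreatest_spec (P := fun ℓ => (T.drop a).take ℓ = (T.drop b).take ℓ)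
    (Nat.zero_le _) rfl

variable {T a b}

theorem le_lce {k : ℕ} (hk : k ≤ T.length) (h : (T.drop a).take k = (T.drop b).take k) :
    k ≤ lce T a b := by
  let := Classical.decPred fun ℓ => (T.drop a).take ℓ = (T.drop b).take ℓ
  exact Nat.le_findGreatest hk h

end lce

section SuffixArray

variable {α : Type*} {T : List α} {SA : ℕ → ℕ}

theorem bwt_eq_getElem! [Inhabited α] {r : ℕ} (h₁ : 1 ≤ SA r) (h₂ : SA r < T.length) :
    bwt T SA r = T[SA r - 1]! := by
  unfold bwt
  rw [show SA r + T.length - 1 = SA r - 1 + T.length by omega, Nat.add_mod_right,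
    Nat.mod_eq_of_lt (by omega)]

variable [Preorder α] (hsorted : ∀ k l, k < l → l < T.length →
  List.Lex (· < ·) (T.drop (SA k)) (T.drop (SA l)))
include hsorted

theorem take_drop_eq_of_rank_between {a b c k : ℕ} (hab : a ≤ b) (hbc : b ≤ c)
    (hc : c < T.length) (h : (T.drop (SA a)).take k = (T.drop (SA c)).take k) :
    (T.drop (SA b)).take k = (T.drop (SA a)).take k := by
  rcases hab.eq_or_lt with rfl | hab
  · rfl
  rcases hbc.eq_or_lt with rfl | hbc
  · exact h.symm
  exact List.take_eq_of_lex_of_lex (hsorted a b hab (hbc.trans hc)) (hsorted b c hbc hc) h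

theorem le_lce_of_nearest_bwt_eq [Inhabited α] {c : α} {q q' q'' r k : ℕ}
    (hq'lt : q' < q) (hq''gt : q < q'') (hq''n : q'' < T.length) (hrn : r < T.length)
    (hnear' : ∀ j, q' < j → j < q → bwt T SA j ≠ c)
    (hnear'' : ∀ j, q < j → j < q'' → bwt T SA j ≠ c)
    (hq : bwt T SA q ≠ c) (hr : bwt T SA r = c) (hk : k ≤ T.length)
    (hrq : (T.drop (SA r)).take k = (T.drop (SA q)).take k) :
    k ≤ lce T (SA q') (SA q) ∨ k ≤ lce T (SA q'') (SA q) := by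
  rcases lt_or_ge r q with hrq' | hqr
  · have hr' : r ≤ q' := not_lt.1 fun h => hnear' r h hrq' hr
    refine .inl (le_lce hk ?_)
    rw [take_drop_eq_of_rank_between hsorted hr' hq'lt.le (hq''gt.trans hq''n) hrq, hrq]
  · have hqr : q < r := hqr.lt_of_ne fun h => hq (h ▸ hr)
    have hr'' : q'' ≤ r := not_lt.1 fun h => hnear'' r hqr h hr
    exact .inr (le_lce hk (take_drop_eq_of_rank_between hsorted hq''gt.le hr'' hrn hrq.symm))

end SuffixArray

theorem single_pass_ms_step_correct_general {α : Type*} [LinearOrder α] [Inhabited α]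
    (T P : List α) (SA ISA : ℕ → ℕ)
    (hSA : ∀ k, k < T.length → SA k < T.length)
    (hsorted : ∀ k l, k < l → l < T.length →
      List.Lex (· < ·) (T.drop (SA k)) (T.drop (SA l)))
    (hISA : ∀ p, p < T.length → ISA p < T.length ∧ SA (ISA p) = p)
    (i pos len : ℕ)
    (hiP : i < P.length)
    (hpos : pos < T.length)
    (hlenP : i + 1 + len ≤ P.length)
    (hoccur : (T.drop pos).take len = (P.drop (i + 1)).take len)
    (hmaximal : i + 1 + len = P.length ∨ ¬ ((P.drop (i + 1)).take (len + 1) <:+: T))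
    (hmismatch : bwt T SA (ISA pos) ≠ P[i]!)
    (q' q'' : ℕ)
    (hq'lt : q' < ISA pos) (hq''gt : ISA pos < q'') (hq''n : q'' < T.length)
    (hbq' : bwt T SA q' = P[i]!) (hbq'' : bwt T SA q'' = P[i]!)
    (hnear' : ∀ k, q' < k → k < ISA pos → bwt T SA k ≠ P[i]!)
    (hnear'' : ∀ k, ISA pos < k → k < q'' → bwt T SA k ≠ P[i]!)
    (hp'1 : 1 ≤ SA q') (hp''1 : 1 ≤ SA q'') :
    let p' := SA q'
    let p'' := SA q''
    let ℓ := max (min len (lce T p' pos)) (min len (lce T p'' pos))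
    let pstar := if min len (lce T p'' pos) ≤ min len (lce T p' pos) then p' else p''
    (P.drop i).take (ℓ + 1) = (T.drop (pstar - 1)).take (ℓ + 1) ∧
      (i + (ℓ + 1) = P.length ∨ ¬ ((P.drop i).take (ℓ + 2) <:+: T)) := by
  intro p' p'' ℓ pstar
  obtain ⟨hqn, hSAq⟩ := hISA pos hpos
  have hℓ : ℓ = max (min len (lce T (SA q') pos)) (min len (lce T (SA q'') pos)) := rfl
  have hℓstar : ℓ = min len (lce T pstar pos) := by
    rw [hℓ, max_def', apply_ite (fun p => min len (lce T p pos))]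
  obtain ⟨hstar1, hstarn, hstarhead⟩ : 1 ≤ pstar ∧ pstar < T.length ∧ T[pstar - 1]! = P[i]! := by
    have hq'n := hq'lt.trans hqn
    simp only [pstar, p', p'']
    split_ifs
    · exact ⟨hp'1, hSA q' hq'n, (bwt_eq_getElem! hp'1 (hSA q' hq'n)).symm.trans hbq'⟩
    · exact ⟨hp''1, hSA q'' hq''n, (bwt_eq_getElem! hp''1 (hSA q'' hq''n)).symm.trans hbq''⟩
  have htail : (T.drop pstar).take ℓ = (P.drop (i + 1)).take ℓ := by
    rw [List.take_eq_take_of_le (take_lce_eq T pstar pos) (hℓstar ▸ min_le_right _ _)]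
    exact List.take_eq_take_of_le hoccur (hℓstar ▸ min_le_left _ _)
  refine ⟨List.take_succ_drop_eq hiP (by omega) hstarhead (by rwa [Nat.sub_add_cancel hstar1]), ?_⟩
  refine or_iff_not_imp_left.2 fun hend hocc => ?_
  rw [List.drop_eq_getElem!_cons hiP, List.take_succ_cons] at hocc
  have hℓlen : ℓ ≤ len := hℓstar ▸ min_le_left _ _
  rcases hℓlen.eq_or_lt with hℓlen | hℓlen
  · rw [hℓlen] at hocc
    exact hmaximal.elim (fun h => hend (by omega))
      (· ((List.infix_cons (List.infix_refl _)).trans hocc))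
  obtain ⟨s, hsT, hs, hst⟩ := List.exists_getElem!_eq_of_cons_infix hocc
  have hL : ((P.drop (i + 1)).take (ℓ + 1)).length = ℓ + 1 := by simp; omega
  rw [hL] at hsT hst
  obtain ⟨hrn, hSAr⟩ := hISA (s + 1) (by omega)
  have hbr : bwt T SA (ISA (s + 1)) = P[i]! := by
    rw [bwt_eq_getElem! (by omega) (by omega), hSAr, Nat.add_sub_cancel, hs]
  have hlce := le_lce_of_nearest_bwt_eq hsorted hq'lt hq''gt hq''n hrn hnear' hnear'' hmismatch
    hbr (k := ℓ + 1) (by omega)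
    (by rw [hSAr, hSAq, hst, List.take_eq_take_of_le hoccur hℓlen])
  rw [hSAq] at hlce
  omega

/-- correctness of the single-pass matching statistics
algorithm: given valid matching statistics `MS[i+1] = (pos, len)` with rank
`q = ISA[pos]`, if `BWT[q] ≠ P[i]` and `q'` (resp. `q''`) is the nearest rank
below (resp. above) `q` whose BWT character is `P[i]`, with corresponding
text positions `p' = SA[q']`, `p'' = SA[q'']`, then, for
`p* ∈ {p', p''}` maximizing `min(len, LCE(p*, pos))` and
`ℓ = min(len, LCE(p*, pos))`, the pair `MS[i] = (p* - 1, ℓ + 1)` is a valid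
matching statistic at position `i` (both conditions of the definition hold). -/
theorem single_pass_ms_step_correct {α : Type*} [LinearOrder α] [Inhabited α]
    (T P : List α) (SA ISA : ℕ → ℕ)
    (hn : 0 < T.length)
    (hSA : ∀ k, k < T.length → SA k < T.length)
    (hsorted : ∀ k l, k < l → l < T.length →
      List.Lex (· < ·) (T.drop (SA k)) (T.drop (SA l)))
    (hISA : ∀ p, p < T.length → ISA p < T.length ∧ SA (ISA p) = p)
    (hsent : ∀ k, k < T.length - 1 → T[T.length - 1]! < T[k]!)
    (i pos len : ℕ)
    (hiP : i < P.length)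
    (hpos : pos < T.length)
    (hlenP : i + 1 + len ≤ P.length)
    (hlenT : pos + len ≤ T.length)
    (hoccur : (T.drop pos).take len = (P.drop (i + 1)).take len)
    (hmaximal : i + 1 + len = P.length ∨ ¬ ((P.drop (i + 1)).take (len + 1) <:+: T))
    (hmismatch : bwt T SA (ISA pos) ≠ P[i]!)
    (q' q'' : ℕ)
    (hq'lt : q' < ISA pos) (hq''gt : ISA pos < q'') (hq''n : q'' < T.length)
    (hbq' : bwt T SA q' = P[i]!) (hbq'' : bwt T SA q'' = P[i]!)
    (hnear' : ∀ k, q' < k → k < ISA pos → bwt T SA k ≠ P[i]!)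
    (hnear'' : ∀ k, ISA pos < k → k < q'' → bwt T SA k ≠ P[i]!)
    (hp'1 : 1 ≤ SA q') (hp''1 : 1 ≤ SA q'') :
    let p' := SA q'
    let p'' := SA q''
    let ℓ := max (min len (lce T p' pos)) (min len (lce T p'' pos))
    let pstar := if min len (lce T p'' pos) ≤ min len (lce T p' pos) then p' else p''
    (P.drop i).take (ℓ + 1) = (T.drop (pstar - 1)).take (ℓ + 1) ∧
      (i + (ℓ + 1) = P.length ∨ ¬ ((P.drop i).take (ℓ + 2) <:+: T)) :=
  single_pass_ms_step_correct_general T P SA ISA hSA hsorted hISA i pos len hiP hpos hlenP hoccur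
    hmaximal hmismatch q' q'' hq'lt hq''gt hq''n hbq' hbq'' hnear' hnear'' hp'1 hp''1
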